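/- arXiv:math/9912237 — 3 statements merged into one kernel-verified Lean document; each statement's English description precedes it below -/
import Mathlib

section
/- Consider any solution x : [0, T] → [0,∞)ⁿ of the system whose initial point x(0) is not a boundary equilibrium (i.e. it is not the case that f(x(0)) = 0 and some coordinate of x(0) is zero). Then x(t) ∈ (0,∞)ⁿ for all t ∈ (0, T]. -/
/-!
Zeros propagate backwards in time: along the (compact) trajectory `θ(u) ≤ K u`, and every
monomial `θ(x)^{b_j}` with `b_{kj} ≠ 0` is at most a constant times `θ(x_k)`, so `x_k' ≥ -C x_k`
and `e^{Ct} x_k(t)` is nondecreasing. Hence the coordinates in the set `S` of those vanishing at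
some positive time vanish together on some `[0, ε]`. At `t = ε/2` the coordinates outside `S` are
positive, so the surviving monomials are those of the columns `b_j` supported off `S`; since
`x_k' = 0` for `k ∈ S` and the surviving terms of `x_k'` are nonnegative, `a_ij = 0` whenever
`b_i` meets `S` and `b_j` does not. By irreducibility of `A`, and since some column meets `S`,
every column meets `S`. Then every monomial vanishes at `x(0)`, a boundary equilibrium.
-/

open Set Filter Topology

theorem Real.rpow_le_mul_rpow {a D c : ℝ} (ha : 0 ≤ a) (haD : a ≤ D) (hD : 1 ≤ D) (hc : 1 ≤ c) :
    a ^ c ≤ a * D ^ c :=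
  calc a ^ c = a ^ ((1 : ℝ) + (c - 1)) := by rw [add_sub_cancel]
    _ = a * a ^ (c - 1) := by rw [Real.rpow_add' ha (by linarith), Real.rpow_one]
    _ ≤ a * D ^ (c - 1) := by gcongr
    _ ≤ a * D ^ c := by gcongr; linarith

theorem Finset.prod_rpow_le_mul_prod_rpow {ι : Type*} [Fintype ι] {φ b : ι → ℝ} {D : ℝ} {k : ι}
    (hφ : ∀ l, 0 ≤ φ l) (hφD : ∀ l, φ l ≤ D) (hD : 1 ≤ D) (hb : ∀ l, 0 ≤ b l) (hbk : 1 ≤ b k) :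
    ∏ l, φ l ^ b l ≤ φ k * ∏ l, D ^ b l := by
  classical
  rw [← Finset.mul_prod_erase _ (fun l => φ l ^ b l) (Finset.mem_univ k),
    ← Finset.mul_prod_erase _ (fun l => D ^ b l) (Finset.mem_univ k), ← mul_assoc]
  have hD₀ : 0 ≤ D := zero_le_one.trans hD
  exact mul_le_mul (Real.rpow_le_mul_rpow (hφ k) (hφD k) hD hbk)
    (Finset.prod_le_prod (fun l _ => Real.rpow_nonneg (hφ l) _)
      fun l _ => Real.rpow_le_rpow (hφ l) (hφD l) (hb l))
    (Finset.prod_nonneg fun l _ => Real.rpow_nonneg (hφ l) _)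
    (mul_nonneg (hφ k) (Real.rpow_nonneg hD₀ _))

theorem LocallyLipschitz.exists_le_mul_of_map_zero {θ : ℝ → ℝ} (hθ : LocallyLipschitz θ)
    (hθ0 : θ 0 = 0) (R : ℝ) : ∃ K : NNReal, ∀ u ∈ Icc 0 R, θ u ≤ K * u := by
  obtain ⟨K, hK⟩ :=
    (hθ.locallyLipschitzOn (s := Icc 0 R)).exists_lipschitzOnWith_of_compact isCompact_Icc
  refine ⟨K, fun u hu => ?_⟩
  have h := hK.dist_le_mul u hu 0 ⟨le_rfl, hu.1.trans hu.2⟩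
  rw [hθ0, Real.dist_eq, Real.dist_eq, sub_zero, sub_zero, abs_of_nonneg hu.1] at h
  exact (le_abs_self _).trans h

theorem eqOn_zero_of_neg_mul_le_deriv {g g' : ℝ → ℝ} {a b C : ℝ}
    (hg : ∀ s ∈ Icc a b, HasDerivWithinAt g (g' s) (Icc a b) s)
    (hnn : ∀ s ∈ Icc a b, 0 ≤ g s) (hbound : ∀ s ∈ Icc a b, -(C * g s) ≤ g' s) (hb : g b = 0) :
    EqOn g 0 (Icc a b) := by
  have hderiv : ∀ s ∈ Icc a b, HasDerivWithinAt (fun u => Real.exp (C * u) * g u)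
      (C * Real.exp (C * s) * g s + Real.exp (C * s) * g' s) (Icc a b) s := by
    intro s hs
    have hexp : HasDerivAt (fun u => Real.exp (C * u)) (C * Real.exp (C * s)) s := by
      simpa [mul_comm] using ((hasDerivAt_id s).const_mul C).exp
    exact hexp.hasDerivWithinAt.mul (hg s hs)
  have hmono : MonotoneOn (fun u => Real.exp (C * u) * g u) (Icc a b) := by
    refine monotoneOn_of_hasDerivWithinAt_nonneg (convex_Icc a b)
      (fun s hs => (hderiv s hs).continuousWithinAt)
      (fun s hs => (hderiv s (interior_subset hs)).mono interior_subset) fun s hs => ?_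
    have hs' := interior_subset hs
    have := mul_le_mul_of_nonneg_left (hbound s hs') (Real.exp_pos (C * s)).le
    linarith
  intro s hs
  have hle := hmono hs ⟨hs.1.trans hs.2, le_rfl⟩ hs.2
  simp only [hb, mul_zero] at hle
  exact le_antisymm (nonpos_of_mul_nonpos_right hle (Real.exp_pos _)) (hnn s hs)

theorem HasDerivWithinAt.eq_zero_of_eqOn_zero {g : ℝ → ℝ} {g' t : ℝ} {s : Set ℝ}
    (h : HasDerivWithinAt g g' s t) (hs : s ∈ 𝓝 t) (hg : EqOn g 0 s) : g' = 0 :=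
  (h.hasDerivAt hs).unique ((hasDerivAt_const t (0 : ℝ)).congr_of_eventuallyEq
    (Filter.mem_of_superset hs hg))

theorem Matrix.one_add_pow_apply_eq_zero {ι R : Type*} [Fintype ι] [DecidableEq ι] [Semiring R]
    {A : Matrix ι ι R} {q : ι → Prop} (hA : ∀ i j, ¬ q i → q j → A i j = 0) (p : ℕ) :
    ∀ i j, ¬ q i → q j → ((1 + A) ^ p) i j = 0 := by
  have hne : ∀ i j, ¬ q i → q j → i ≠ j := by rintro i j hi hj rfl; exact hi hj
  have hA' : ∀ i j, ¬ q i → q j → (1 + A) i j = 0 := fun i j hi hj => by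
    rw [Matrix.add_apply, Matrix.one_apply_ne (hne i j hi hj), hA i j hi hj, add_zero]
  induction p with
  | zero => exact fun i j hi hj => by rw [pow_zero, Matrix.one_apply_ne (hne i j hi hj)]
  | succ p ih =>
    intro i j hi hj
    rw [pow_succ, Matrix.mul_apply]
    refine Finset.sum_eq_zero fun c _ => ?_
    by_cases hc : q c
    · rw [ih i c hi hc, zero_mul]
    · rw [hA' c j hc hj, mul_zero]

theorem Matrix.forall_or_forall_not_of_one_add_pow_pos {ι R : Type*} [Fintype ι] [DecidableEq ι]
    [Semiring R] [Preorder R] {A : Matrix ι ι R} {p : ℕ} (hpos : ∀ i j, 0 < ((1 + A) ^ p) i j)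
    {q : ι → Prop} (hA : ∀ i j, ¬ q i → q j → A i j = 0) : (∀ i, q i) ∨ ∀ i, ¬ q i := by
  by_contra! h
  obtain ⟨⟨i, hi⟩, j, hj⟩ := h
  exact (hpos i j).ne' (Matrix.one_add_pow_apply_eq_zero hA p i j hi hj)

namespace MassAction

variable {ι κ : Type*} [Fintype ι]

noncomputable def monomial (θ : ℝ → ℝ) (B : Matrix ι κ ℝ) (v : ι → ℝ) (j : κ) : ℝ :=
  ∏ l, θ (v l) ^ B l j

section Monomial

variable {θ : ℝ → ℝ} {B : Matrix ι κ ℝ}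

theorem monomial_nonneg (hθnn : ∀ y, 0 ≤ θ y) (v : ι → ℝ) (j : κ) : 0 ≤ monomial θ B v j :=
  Finset.prod_nonneg fun _ _ => Real.rpow_nonneg (hθnn _) _

theorem monomial_eq_zero (hθ0 : θ 0 = 0) {v : ι → ℝ} {j : κ} {l : ι} (hl : v l = 0)
    (hB : B l j ≠ 0) : monomial θ B v j = 0 :=
  Finset.prod_eq_zero (Finset.mem_univ l) (by rw [hl, hθ0, Real.zero_rpow hB])

theorem monomial_pos (hθpos : ∀ y, 0 < y → 0 < θ y) {v : ι → ℝ} {j : κ}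
    (hv : ∀ l, B l j ≠ 0 → 0 < v l) : 0 < monomial θ B v j := by
  refine Finset.prod_pos fun l _ => ?_
  by_cases hB : B l j = 0
  · rw [hB, Real.rpow_zero]; exact one_pos
  · exact Real.rpow_pos_of_pos (hθpos _ (hv l hB)) _

theorem monomial_mul_le (hθnn : ∀ y, 0 ≤ θ y) (hBnn : ∀ k j, 0 ≤ B k j) {v : ι → ℝ} {D : ℝ}
    (hD : 1 ≤ D) (hθD : ∀ l, θ (v l) ≤ D) {k : ι} {j : κ} (hBkj : B k j = 0 ∨ 1 ≤ B k j) :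
    monomial θ B v j * B k j ≤ θ (v k) * (B k j * ∏ l, D ^ B l j) := by
  rcases hBkj with h0 | h1
  · simp [h0]
  · rw [← mul_assoc, mul_right_comm]
    gcongr
    exact Finset.prod_rpow_le_mul_prod_rpow (fun l => hθnn _) hθD hD (fun l => hBnn l j) h1

end Monomial

variable [Fintype κ]

noncomputable def vectorField (θ : ℝ → ℝ) (A : Matrix κ κ ℝ) (B : Matrix ι κ ℝ) (v : ι → ℝ)
    (k : ι) : ℝ :=
  ∑ i, ∑ j, A i j * monomial θ B v j * (B k i - B k j)

variable {θ : ℝ → ℝ} {A : Matrix κ κ ℝ} {B : Matrix ι κ ℝ}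

theorem vectorField_eq_zero (hθ0 : θ 0 = 0) {v : ι → ℝ}
    (h : ∀ j, ∃ l, v l = 0 ∧ B l j ≠ 0) : vectorField θ A B v = 0 := by
  ext k
  refine Finset.sum_eq_zero fun i _ => Finset.sum_eq_zero fun j _ => ?_
  obtain ⟨l, hl, hB⟩ := h j
  rw [monomial_eq_zero hθ0 hl hB, mul_zero, zero_mul]

theorem exists_neg_mul_le_vectorField (hθ : LocallyLipschitz θ) (hθ0 : θ 0 = 0)
    (hθnn : ∀ y, 0 ≤ θ y) (hAnn : ∀ i j, 0 ≤ A i j) (hBnn : ∀ k j, 0 ≤ B k j)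
    (hBent : ∀ k j, B k j = 0 ∨ 1 ≤ B k j) (R : ℝ) (k : ι) :
    ∃ C, ∀ v : ι → ℝ, (∀ l, v l ∈ Icc 0 R) → -(C * v k) ≤ vectorField θ A B v k := by
  obtain ⟨K, hK⟩ := hθ.exists_le_mul_of_map_zero hθ0 R
  set D := max 1 (K * R)
  have hθD : ∀ v : ι → ℝ, (∀ l, v l ∈ Icc 0 R) → ∀ l, θ (v l) ≤ D := fun v hv l =>
    (hK _ (hv l)).trans <| (mul_le_mul_of_nonneg_left (hv l).2 K.2).trans (le_max_right _ _)
  refine ⟨∑ i, ∑ j, A i j * (K * (B k j * ∏ l, D ^ B l j)), fun v hv => ?_⟩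
  calc -((∑ i, ∑ j, A i j * (K * (B k j * ∏ l, D ^ B l j))) * v k)
      = ∑ i, ∑ j, -(A i j * (K * v k * (B k j * ∏ l, D ^ B l j))) := by
        simp only [Finset.sum_mul, ← Finset.sum_neg_distrib]
        exact Finset.sum_congr rfl fun i _ => Finset.sum_congr rfl fun j _ => by ring
    _ ≤ vectorField θ A B v k := by
        refine Finset.sum_le_sum fun i _ => Finset.sum_le_sum fun j _ => ?_
        have hterm := (monomial_mul_le hθnn hBnn (le_max_left _ _) (hθD v hv) (hBent k j)).trans
          (mul_le_mul_of_nonneg_right (hK _ (hv k))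
            (mul_nonneg (hBnn k j) (Finset.prod_nonneg fun l _ =>
              Real.rpow_nonneg (zero_le_one.trans (le_max_left _ _)) _)))
        have hgain :=
          mul_nonneg (mul_nonneg (hAnn i j) (monomial_nonneg (B := B) hθnn v j)) (hBnn k i)
        nlinarith [mul_le_mul_of_nonneg_left hterm (hAnn i j)]

theorem apply_eq_zero_of_vectorField_eq_zero (hθ0 : θ 0 = 0) (hθnn : ∀ y, 0 ≤ θ y)
    (hθpos : ∀ y, 0 < y → 0 < θ y) (hAnn : ∀ i j, 0 ≤ A i j) (hBnn : ∀ k j, 0 ≤ B k j)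
    {S : Set ι} {v : ι → ℝ} (hS : ∀ l ∈ S, v l = 0) (hSc : ∀ l ∉ S, 0 < v l)
    (hv : ∀ k ∈ S, vectorField θ A B v k = 0) {i j : κ} (hi : ∃ l ∈ S, B l i ≠ 0)
    (hj : ∀ l ∈ S, B l j = 0) : A i j = 0 := by
  obtain ⟨k, hk, hBki⟩ := hi
  have hterm : ∀ i' j', A i' j' * monomial θ B v j' * (B k i' - B k j')
      = A i' j' * monomial θ B v j' * B k i' := fun i' j' => by
    by_cases hj' : ∀ l ∈ S, B l j' = 0
    · rw [hj' k hk, sub_zero]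
    · push Not at hj'
      obtain ⟨l, hl, hB⟩ := hj'
      rw [monomial_eq_zero hθ0 (hS l hl) hB]
      ring
  have hnn : ∀ i' j', 0 ≤ A i' j' * monomial θ B v j' * B k i' := fun i' j' =>
    mul_nonneg (mul_nonneg (hAnn i' j') (monomial_nonneg hθnn v j')) (hBnn k i')
  have hsum := hv k hk
  simp only [vectorField, hterm] at hsum
  rw [Fintype.sum_eq_zero_iff_of_nonneg fun i' => Finset.sum_nonneg fun j' _ => hnn i' j'] at hsum
  have hrow := congrFun hsum i
  rw [Pi.zero_apply, Fintype.sum_eq_zero_iff_of_nonneg fun j' => hnn i j'] at hrow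
  have hmono : 0 < monomial θ B v j := monomial_pos hθpos fun l hB =>
    hSc l fun hl => hB (hj l hl)
  simpa [hmono.ne', hBki] using congrFun hrow j

theorem exists_mem_apply_ne_zero_of_vectorField_eq_zero [DecidableEq κ] (hθ0 : θ 0 = 0)
    (hθnn : ∀ y, 0 ≤ θ y) (hθpos : ∀ y, 0 < y → 0 < θ y) (hAnn : ∀ i j, 0 ≤ A i j) {p : ℕ}
    (hAirr : ∀ i j, 0 < ((1 + A) ^ p) i j) (hBnn : ∀ k j, 0 ≤ B k j)
    (hBrow : ∀ k, ∃ j, B k j ≠ 0) {S : Set ι} {v : ι → ℝ} (hS : ∀ l ∈ S, v l = 0)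
    (hSc : ∀ l ∉ S, 0 < v l) (hv : ∀ k ∈ S, vectorField θ A B v k = 0) {k₀ : ι} (hk₀ : k₀ ∈ S)
    (j : κ) : ∃ l ∈ S, B l j ≠ 0 := by
  obtain ⟨j₀, hj₀⟩ := hBrow k₀
  have hmeet : ∀ j, ¬ ∀ l ∈ S, B l j = 0 := by
    refine (Matrix.forall_or_forall_not_of_one_add_pow_pos hAirr fun i j hi hj => ?_).resolve_left
      fun h => hj₀ (h j₀ k₀ hk₀)
    push Not at hi
    exact apply_eq_zero_of_vectorField_eq_zero hθ0 hθnn hθpos hAnn hBnn hS hSc hv hi hj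
  push Not at hmeet
  exact hmeet j

variable {T : ℝ} {x : ℝ → ι → ℝ}

theorem eqOn_zero_of_apply_eq_zero (hθ : LocallyLipschitz θ) (hθ0 : θ 0 = 0)
    (hθnn : ∀ y, 0 ≤ θ y) (hAnn : ∀ i j, 0 ≤ A i j) (hBnn : ∀ k j, 0 ≤ B k j)
    (hBent : ∀ k j, B k j = 0 ∨ 1 ≤ B k j)
    (hx : ∀ t ∈ Icc 0 T, HasDerivWithinAt x (vectorField θ A B (x t)) (Icc 0 T) t)
    (hnn : ∀ t ∈ Icc 0 T, ∀ k, 0 ≤ x t k) {t₁ : ℝ} (ht₁ : t₁ ∈ Icc 0 T) {k : ι}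
    (hk : x t₁ k = 0) : EqOn (fun s => x s k) 0 (Icc 0 t₁) := by
  have hsub : Icc 0 t₁ ⊆ Icc 0 T := Icc_subset_Icc le_rfl ht₁.2
  obtain ⟨R, hR⟩ := isCompact_Icc.exists_bound_of_continuousOn
    fun t ht => (hx t ht).continuousWithinAt
  have hxR : ∀ s ∈ Icc 0 T, ∀ l, x s l ∈ Icc 0 R := fun s hs l =>
    ⟨hnn s hs l, (le_abs_self _).trans ((norm_le_pi_norm (x s) l).trans (hR s hs))⟩
  obtain ⟨C, hC⟩ := exists_neg_mul_le_vectorField hθ hθ0 hθnn hAnn hBnn hBent R k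
  exact eqOn_zero_of_neg_mul_le_deriv
    (fun s hs => (hasDerivWithinAt_pi.1 (hx s (hsub hs)) k).mono hsub)
    (fun s hs => hnn s (hsub hs) k) (fun s hs => hC _ (hxR s (hsub hs))) hk

theorem vectorField_apply_eq_zero_of_eqOn_zero
    (hx : ∀ t ∈ Icc 0 T, HasDerivWithinAt x (vectorField θ A B (x t)) (Icc 0 T) t)
    {a b t : ℝ} (hab : Icc a b ⊆ Icc 0 T) (ht : t ∈ Ioo a b) {k : ι}
    (hk : EqOn (fun s => x s k) 0 (Icc a b)) : vectorField θ A B (x t) k = 0 :=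
  ((hasDerivWithinAt_pi.1 (hx t (hab (Ioo_subset_Icc_self ht))) k).mono hab).eq_zero_of_eqOn_zero
    (Icc_mem_nhds ht.1 ht.2) hk

theorem exists_eqOn_zero_of_exists_apply_eq_zero (hθ : LocallyLipschitz θ) (hθ0 : θ 0 = 0)
    (hθnn : ∀ y, 0 ≤ θ y) (hAnn : ∀ i j, 0 ≤ A i j) (hBnn : ∀ k j, 0 ≤ B k j)
    (hBent : ∀ k j, B k j = 0 ∨ 1 ≤ B k j)
    (hx : ∀ t ∈ Icc 0 T, HasDerivWithinAt x (vectorField θ A B (x t)) (Icc 0 T) t)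
    (hnn : ∀ t ∈ Icc 0 T, ∀ k, 0 ≤ x t k) (hT : 0 < T) :
    ∃ ε ∈ Ioc 0 T, ∀ k, (∃ t ∈ Ioc 0 T, x t k = 0) → EqOn (fun s => x s k) 0 (Icc 0 ε) := by
  have hev : ∀ k, ∀ᶠ ε in 𝓝[>] 0,
      (∃ t ∈ Ioc 0 T, x t k = 0) → EqOn (fun s => x s k) 0 (Icc 0 ε) := by
    intro k
    by_cases hk : ∃ t ∈ Ioc 0 T, x t k = 0
    · obtain ⟨t, ht, hxt⟩ := hk
      filter_upwards [Ioc_mem_nhdsGT ht.1] with ε hε _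
      exact (eqOn_zero_of_apply_eq_zero hθ hθ0 hθnn hAnn hBnn hBent hx hnn
        (Ioc_subset_Icc_self ht) hxt).mono (Icc_subset_Icc le_rfl hε.2)
    · exact Eventually.of_forall fun _ h => absurd h hk
  obtain ⟨ε, hε, hεT⟩ := ((eventually_all.2 hev).and (Ioc_mem_nhdsGT hT)).exists
  exact ⟨ε, hεT, hε⟩

end MassAction

open MassAction in
theorem stmt_15_general
    (n m : ℕ)
    (θ : ℝ → ℝ)
    (hθlip : LocallyLipschitz θ)
    (hθ0 : θ 0 = 0)
    (hθnn : ∀ y : ℝ, 0 ≤ θ y)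
    (hθmono : StrictMonoOn θ (Set.Ici (0:ℝ)))
    (A : Matrix (Fin m) (Fin m) ℝ)
    (hAnn : ∀ i j, 0 ≤ A i j)
    (hAirr : ∀ i j, 0 < ((1 + A) ^ (m - 1)) i j)
    (B : Matrix (Fin n) (Fin m) ℝ)
    (hBnn : ∀ k j, 0 ≤ B k j)
    (hBrow : ∀ k, ∃ j, B k j ≠ 0)
    (hBent : ∀ k j, B k j = 0 ∨ 1 ≤ B k j)
    (f : EuclideanSpace ℝ (Fin n) → EuclideanSpace ℝ (Fin n))
    (hf : ∀ x : EuclideanSpace ℝ (Fin n), ∀ k : Fin n,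
      f x k = ∑ i : Fin m, ∑ j : Fin m,
        A i j * (∏ l : Fin n, θ (x l) ^ (B l j)) * (B k i - B k j))
    :
    ∀ T : ℝ, 0 ≤ T → ∀ x : ℝ → EuclideanSpace ℝ (Fin n),
      (∀ t ∈ Set.Icc (0:ℝ) T, HasDerivWithinAt x (f (x t)) (Set.Icc 0 T) t) →
      (∀ t ∈ Set.Icc (0:ℝ) T, ∀ k, 0 ≤ x t k) →
      ¬ (f (x 0) = 0 ∧ ∃ k, x 0 k = 0) →
      ∀ t ∈ Set.Ioc (0:ℝ) T, ∀ k, 0 < x t k := by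
  intro T _ x hx hnn hne
  set y : ℝ → Fin n → ℝ := fun s => (x s).ofLp
  have hy : ∀ t ∈ Icc 0 T, HasDerivWithinAt y (vectorField θ A B (y t)) (Icc 0 T) t := by
    intro t ht
    have h := (PiLp.continuousLinearEquiv 2 ℝ (fun _ : Fin n => ℝ)).hasFDerivAt
      |>.comp_hasDerivWithinAt t (hx t ht)
    exact h.congr_deriv (funext fun k => hf (x t) k)
  have hθpos : ∀ u, 0 < u → 0 < θ u := fun u hu =>
    hθ0 ▸ hθmono self_mem_Ici (le_of_lt hu) hu
  by_contra! hcon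
  obtain ⟨t₀, ht₀, k₀, hk₀⟩ := hcon
  set S : Set (Fin n) := {k | ∃ t ∈ Ioc 0 T, y t k = 0}
  have hk₀S : k₀ ∈ S := ⟨t₀, ht₀, le_antisymm hk₀ (hnn t₀ (Ioc_subset_Icc_self ht₀) k₀)⟩
  obtain ⟨ε, hε, hvanish⟩ := exists_eqOn_zero_of_exists_apply_eq_zero hθlip hθ0 hθnn hAnn hBnn
    hBent hy hnn (ht₀.1.trans_le ht₀.2)
  have hmid : ε / 2 ∈ Ioo 0 ε := ⟨half_pos hε.1, half_lt_self hε.1⟩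
  have hsub : Icc 0 ε ⊆ Icc 0 T := Icc_subset_Icc le_rfl hε.2
  have hstat : ∀ k ∈ S, vectorField θ A B (y (ε / 2)) k = 0 := fun k hk =>
    vectorField_apply_eq_zero_of_eqOn_zero hy hsub hmid (hvanish k hk)
  have hpos : ∀ k ∉ S, 0 < y (ε / 2) k := fun k hk =>
    (hnn _ (hsub (Ioo_subset_Icc_self hmid)) k).lt_of_ne fun h =>
      hk ⟨ε / 2, ⟨hmid.1, (hmid.2.trans_le hε.2).le⟩, h.symm⟩
  have hmeet := exists_mem_apply_ne_zero_of_vectorField_eq_zero hθ0 hθnn hθpos hAnn hAirr hBnn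
    hBrow (fun l hl => hvanish l hl (Ioo_subset_Icc_self hmid)) hpos hstat hk₀S
  have h0 : vectorField θ A B (y 0) = 0 := vectorField_eq_zero hθ0 fun j => by
    obtain ⟨l, hl, hB⟩ := hmeet j
    exact ⟨l, hvanish l hl ⟨le_rfl, hε.1.le⟩, hB⟩
  refine hne ⟨?_, k₀, hvanish k₀ hk₀S ⟨le_rfl, hε.1.le⟩⟩
  ext k
  exact (hf (x 0) k).trans (congrFun h0 k)

theorem stmt_15
    (n m : ℕ) (hm : 0 < m) (hmn : m ≤ n)
    (θ : ℝ → ℝ)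
    (hθlip : LocallyLipschitz θ)
    (hθ0 : θ 0 = 0)
    (hθnn : ∀ y : ℝ, 0 ≤ θ y)
    (hθmono : StrictMonoOn θ (Set.Ici (0:ℝ)))
    (hθonto : ∀ r : ℝ, 0 ≤ r → ∃ y : ℝ, 0 ≤ y ∧ θ y = r)
    (hθint : MeasureTheory.IntegrableOn (fun y => |Real.log (θ y)|) (Set.Ioc (0:ℝ) 1))
    (A : Matrix (Fin m) (Fin m) ℝ)
    (hAnn : ∀ i j, 0 ≤ A i j)
    (hAirr : ∀ i j, 0 < ((1 + A) ^ (m - 1)) i j)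
    (B : Matrix (Fin n) (Fin m) ℝ)
    (hBnn : ∀ k j, 0 ≤ B k j)
    (hBrank : B.rank = m)
    (hBrow : ∀ k, ∃ j, B k j ≠ 0)
    (hBent : ∀ k j, B k j = 0 ∨ 1 ≤ B k j)
    (f : EuclideanSpace ℝ (Fin n) → EuclideanSpace ℝ (Fin n))
    (hf : ∀ x : EuclideanSpace ℝ (Fin n), ∀ k : Fin n,
      f x k = ∑ i : Fin m, ∑ j : Fin m,
        A i j * (∏ l : Fin n, θ (x l) ^ (B l j)) * (B k i - B k j))
    :
    ∀ T : ℝ, 0 ≤ T → ∀ x : ℝ → EuclideanSpace ℝ (Fin n),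
      (∀ t ∈ Set.Icc (0:ℝ) T, HasDerivWithinAt x (f (x t)) (Set.Icc 0 T) t) →
      (∀ t ∈ Set.Icc (0:ℝ) T, ∀ k, 0 ≤ x t k) →
      ¬ (f (x 0) = 0 ∧ ∃ k, x 0 k = 0) →
      ∀ t ∈ Set.Ioc (0:ℝ) T, ∀ k, 0 < x t k :=
  stmt_15_general n m θ hθlip hθ0 hθnn hθmono A hAnn hAirr B hBnn hBrow hBent f hf
end

section
/- Define the quadratic form Q(η₁,…,η_m) := Σ_{i=1}^m Σ_{j=1}^m a_{ij} (η_i − η_j)². Then there exists a constant κ > 0 such that Q(q₁,…,q_m) ≥ κ Σ_{i=1}^m Σ_{j=1}^m (q_i − q_j)² for all (q₁,…,q_m) ∈ ℝ^m. -/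
open Finset

private lemma pow_entry_nonneg {m : ℕ} (A : Matrix (Fin m) (Fin m) ℝ)
    (hAnn : ∀ i j, 0 ≤ A i j) :
    ∀ (k : ℕ) (i j : Fin m), 0 ≤ ((1 + A) ^ k) i j := by
  intro k
  induction k with
  | zero =>
    intro i j
    rw [pow_zero, Matrix.one_apply]
    split <;> norm_num
  | succ k ih =>
    intro i j
    rw [pow_succ, Matrix.mul_apply]
    refine Finset.sum_nonneg fun l _ => mul_nonneg (ih i l) ?_
    have : (1 + A) l j = (if l = j then (1:ℝ) else 0) + A l j := by
      simp [Matrix.add_apply, Matrix.one_apply]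
    rw [this]
    have := hAnn l j
    split <;> linarith

private lemma connect_aux {m : ℕ} (A : Matrix (Fin m) (Fin m) ℝ)
    (hAnn : ∀ i j, 0 ≤ A i j) (q : Fin m → ℝ)
    (hq : ∀ s t, 0 < A s t → q s = q t) :
    ∀ (k : ℕ) (i j : Fin m), 0 < ((1 + A) ^ k) i j → q i = q j := by
  intro k
  induction k with
  | zero =>
    intro i j h
    rw [pow_zero, Matrix.one_apply] at h
    split at h
    · rename_i h'; rw [h']
    · exact absurd h (lt_irrefl 0)
  | succ k ih =>
    intro i j h
    rw [pow_succ, Matrix.mul_apply] at h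
    obtain ⟨l, _, hl⟩ := Finset.exists_ne_zero_of_sum_ne_zero (ne_of_gt h)
    have h1 : 0 ≤ ((1 + A) ^ k) i l := pow_entry_nonneg A hAnn k i l
    have h2 : 0 ≤ (1 + A) l j := by
      have : (1 + A) l j = (if l = j then (1:ℝ) else 0) + A l j := by
        simp [Matrix.add_apply, Matrix.one_apply]
      rw [this]
      have := hAnn l j
      split <;> linarith
    have hprod : 0 < ((1 + A) ^ k) i l * (1 + A) l j :=
      lt_of_le_of_ne (mul_nonneg h1 h2) (Ne.symm hl)
    rcases mul_pos_iff.mp hprod with ⟨ha, hb⟩ | ⟨ha, _⟩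
    · have hil := ih i l ha
      by_cases hlj : l = j
      · rw [hil, hlj]
      · have : (1 + A) l j = A l j := by
          simp [Matrix.add_apply, Matrix.one_apply, hlj]
        rw [this] at hb
        rw [hil, hq l j hb]
    · exact absurd ha (not_lt.mpr h1)

private lemma form_scale {m : ℕ} (w : Fin m → Fin m → ℝ) (c : ℝ) (q : Fin m → ℝ) :
    ∑ i, ∑ j, w i j * (c * q i - c * q j) ^ 2
      = c ^ 2 * ∑ i, ∑ j, w i j * (q i - q j) ^ 2 := by
  rw [Finset.mul_sum]
  refine Finset.sum_congr rfl fun i _ => ?_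
  rw [Finset.mul_sum]
  refine Finset.sum_congr rfl fun j _ => ?_
  ring

private lemma form_shift {m : ℕ} (w : Fin m → Fin m → ℝ) (c : ℝ) (q : Fin m → ℝ) :
    ∑ i, ∑ j, w i j * ((q i - c) - (q j - c)) ^ 2
      = ∑ i, ∑ j, w i j * (q i - q j) ^ 2 := by
  refine Finset.sum_congr rfl fun i _ => Finset.sum_congr rfl fun j _ => ?_
  ring

theorem stmt_16
    (m : ℕ) (hm : 0 < m)
    (A : Matrix (Fin m) (Fin m) ℝ)
    (hAnn : ∀ i j, 0 ≤ A i j)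
    (hAirr : ∀ i j, 0 < ((1 + A) ^ (m - 1)) i j)
    :
    ∃ κ : ℝ, 0 < κ ∧ ∀ q : Fin m → ℝ,
      κ * (∑ i, ∑ j, (q i - q j) ^ 2) ≤ ∑ i, ∑ j, A i j * (q i - q j) ^ 2 := by
  by_cases hm1 : m = 1
  · subst hm1
    refine ⟨1, one_pos, fun q => ?_⟩
    simp
  · have hm2 : 2 ≤ m := by omega
    set i0 : Fin m := ⟨0, hm⟩ with hi0
    set i1 : Fin m := ⟨1, by omega⟩ with hi1
    have hi01 : i0 ≠ i1 := by simp [hi0, hi1, Fin.ext_iff]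
    -- the two quadratic forms
    set S : (Fin m → ℝ) → ℝ := fun q => ∑ i, ∑ j, (q i - q j) ^ 2 with hS
    set F : (Fin m → ℝ) → ℝ := fun q => ∑ i, ∑ j, A i j * (q i - q j) ^ 2 with hF
    have hScont : Continuous S := by fun_prop
    have hFcont : Continuous F := by fun_prop
    have hSnn : ∀ q, 0 ≤ S q :=
      fun q => Finset.sum_nonneg fun i _ => Finset.sum_nonneg fun j _ => sq_nonneg _
    have hFnn : ∀ q, 0 ≤ F q :=
      fun q => Finset.sum_nonneg fun i _ => Finset.sum_nonneg fun j _ =>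
        mul_nonneg (hAnn i j) (sq_nonneg _)
    have hterm : ∀ (q : Fin m → ℝ) i j, (q i - q j) ^ 2 ≤ S q := by
      intro q i j
      have h1 : (q i - q j) ^ 2 ≤ ∑ j', (q i - q j') ^ 2 :=
        Finset.single_le_sum (f := fun j' => (q i - q j') ^ 2)
          (fun j' _ => sq_nonneg _) (mem_univ j)
      have h2 : ∑ j', (q i - q j') ^ 2 ≤ S q :=
        Finset.single_le_sum (f := fun i' => ∑ j', (q i' - q j') ^ 2)
          (fun i' _ => Finset.sum_nonneg fun j' _ => sq_nonneg _) (mem_univ i)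
      linarith
    have hSone : ∀ (q : Fin m → ℝ), S (fun i => (1:ℝ) * q i) = S q := by
      intro q; simp [hS]
    have hSscale : ∀ (c : ℝ) (q : Fin m → ℝ), S (fun i => c * q i) = c ^ 2 * S q := by
      intro c q
      have := form_scale (fun _ _ => (1:ℝ)) c q
      simpa [hS] using this
    have hFscale : ∀ (c : ℝ) (q : Fin m → ℝ), F (fun i => c * q i) = c ^ 2 * F q := by
      intro c q
      exact form_scale A c q
    have hSshift : ∀ (c : ℝ) (q : Fin m → ℝ), S (fun i => q i - c) = S q := by
      intro c q
      have := form_shift (fun _ _ => (1:ℝ)) c q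
      simp only [one_mul] at this ⊢; exact this
    have hFshift : ∀ (c : ℝ) (q : Fin m → ℝ), F (fun i => q i - c) = F q := by
      intro c q
      exact form_shift A c q
    -- the compact set
    set K : Set (Fin m → ℝ) := {q | S q = 1 ∧ q i0 = 0} with hK
    have hKclosed : IsClosed K :=
      (isClosed_eq hScont continuous_const).inter
        (isClosed_eq (continuous_apply i0) continuous_const)
    have hKbdd : Bornology.IsBounded K := by
      rw [Metric.isBounded_iff_subset_closedBall 0]
      refine ⟨1, fun q hq => ?_⟩
      rw [Metric.mem_closedBall, dist_zero_right]
      rw [pi_norm_le_iff_of_nonneg zero_le_one]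
      intro i
      rw [Real.norm_eq_abs]
      have h1 : (q i - q i0) ^ 2 ≤ 1 := by
        have := hterm q i i0
        rw [hq.1] at this
        exact this
      rw [hq.2, sub_zero] at h1
      rcases abs_cases (q i) with ⟨h, _⟩ | ⟨h, _⟩ <;> nlinarith
    have hKcompact : IsCompact K :=
      Metric.isCompact_of_isClosed_isBounded hKclosed hKbdd
    -- K is nonempty
    have hKne : K.Nonempty := by
      set qt : Fin m → ℝ := fun i => if i = i1 then 1 else 0 with hqt
      have hqti1 : qt i1 = 1 := by simp [hqt]
      have hqti0 : qt i0 = 0 := by simp [hqt, hi01]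
      have hSqt : 0 < S qt := by
        have := hterm qt i1 i0
        rw [hqti1, hqti0] at this
        norm_num at this
        linarith
      set c : ℝ := (Real.sqrt (S qt))⁻¹ with hc
      refine ⟨fun i => c * qt i, ?_, ?_⟩
      · rw [hSscale]
        rw [hc, inv_pow, Real.sq_sqrt (le_of_lt hSqt)]
        exact inv_mul_cancel₀ (ne_of_gt hSqt)
      · show c * qt i0 = 0
        rw [hqti0, mul_zero]
    -- minimize F on K
    obtain ⟨q₀, hq₀K, hq₀min⟩ := hKcompact.exists_isMinOn hKne hFcont.continuousOn
    refine ⟨F q₀, ?_, ?_⟩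
    · rcases lt_or_eq_of_le (hFnn q₀) with h | h
      · exact h
      · exfalso
        have hzero : ∀ i j, A i j * (q₀ i - q₀ j) ^ 2 = 0 := by
          intro i j
          have houter := (Finset.sum_eq_zero_iff_of_nonneg
            (fun i' _ => Finset.sum_nonneg fun j' _ =>
              mul_nonneg (hAnn i' j') (sq_nonneg _))).mp h.symm i (mem_univ i)
          exact (Finset.sum_eq_zero_iff_of_nonneg
            (fun j' _ => mul_nonneg (hAnn i j') (sq_nonneg _))).mp houter j (mem_univ j)
        have hqc : ∀ s t, 0 < A s t → q₀ s = q₀ t := by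
          intro s t hst
          have := hzero s t
          have h2 : (q₀ s - q₀ t) ^ 2 = 0 := by
            rcases mul_eq_zero.mp this with h' | h'
            · exact absurd h' (ne_of_gt hst)
            · exact h'
          have := pow_eq_zero_iff (n := 2) (by norm_num) |>.mp h2
          linarith [sub_eq_zero.mp this]
        have hall : ∀ i j, q₀ i = q₀ j :=
          fun i j => connect_aux A hAnn q₀ hqc (m - 1) i j (hAirr i j)
        have hS0 : S q₀ = 0 := by
          refine Finset.sum_eq_zero fun i _ => Finset.sum_eq_zero fun j _ => ?_
          rw [hall i j, sub_self]
          norm_num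
        rw [hq₀K.1] at hS0
        norm_num at hS0
    · intro q
      show F q₀ * S q ≤ F q
      rcases lt_or_eq_of_le (hSnn q) with hs | hs
      · set s : ℝ := S q with hsdef
        set c : ℝ := (Real.sqrt s)⁻¹ with hc
        have hc2 : c ^ 2 = s⁻¹ := by
          rw [hc, inv_pow, Real.sq_sqrt (le_of_lt hs)]
        set q₂ : Fin m → ℝ := fun i => c * (q i - q i0) with hq₂
        have hq₂K : q₂ ∈ K := by
          constructor
          · rw [hq₂]
            rw [show (fun i => c * (q i - q i0)) = (fun i => c * ((fun i' => q i' - q i0) i)) from rfl]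
            rw [hSscale, hSshift, hc2]
            exact inv_mul_cancel₀ (ne_of_gt hs)
          · simp [hq₂]
        have hmin := isMinOn_iff.mp hq₀min q₂ hq₂K
        have hFq₂ : F q₂ = s⁻¹ * F q := by
          rw [hq₂]
          rw [show (fun i => c * (q i - q i0)) = (fun i => c * ((fun i' => q i' - q i0) i)) from rfl]
          rw [hFscale, hFshift, hc2]
        rw [hFq₂] at hmin
        have hsne : s ≠ 0 := ne_of_gt hs
        calc F q₀ * s ≤ (s⁻¹ * F q) * s := mul_le_mul_of_nonneg_right hmin hs.le
          _ = F q := by field_simp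
      · rw [← hs, mul_zero]
        exact hFnn q
end

section
/- For each fixed z ∈ (0,∞)ⁿ, the function W(·, z) : [0,∞)ⁿ → ℝ defined by W(x, z) := Σ_{i=1}^n ( ∫₁^{x_i} ρ(s) ds − ρ(z_i) x_i ) is well defined and continuous, satisfies W(x, z) > W(z, z) for every x ∈ [0,∞)ⁿ with x ≠ z (so z is the unique global minimizer of W(·, z)), and has compact sublevel sets: {x ∈ [0,∞)ⁿ : W(x, z) ≤ w} is compact for every w ∈ ℝ. -/
/-!
Each summand `t ↦ ∫₁ᵗ ρ - ρ(zᵢ) t` differs from its value at `a` by `∫ₐᵗ (ρ - ρ(zᵢ))`, and since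
`ρ` is strictly increasing this integrand has the sign of `s - zᵢ`; so `zᵢ` is the strict minimiser
of the summand on `[0, ∞)`. As `ρ` is unbounded above, beyond a point `T` with `ρ T ≥ ρ(zᵢ) + 1`
the summand grows at least linearly. Hence on a sublevel set of the sum every coordinate is bounded
(the other summands being bounded below), and the set is closed by continuity.
-/

open MeasureTheory Set Filter

section TiltedPrimitive

variable {ρ : ℝ → ℝ}

theorem integrableOn_Ioc_zero_of_continuousOn (hcont : ContinuousOn ρ (Ioi 0))
    (hint : IntegrableOn ρ (Ioc 0 1)) (b : ℝ) : IntegrableOn ρ (Ioc 0 b) := by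
  have hIcc : IntegrableOn ρ (Icc 1 b) :=
    (hcont.mono fun s hs => zero_lt_one.trans_le hs.1).integrableOn_Icc
  refine (hint.union hIcc).mono_set fun s ⟨hs0, hsb⟩ => ?_
  rcases le_total s 1 with hs1 | hs1
  exacts [Or.inl ⟨hs0, hs1⟩, Or.inr ⟨hs1, hsb⟩]

theorem intervalIntegrable_of_continuousOn_Ioi (hcont : ContinuousOn ρ (Ioi 0))
    (hint : IntegrableOn ρ (Ioc 0 1)) {a b : ℝ} (ha : 0 ≤ a) (hb : 0 ≤ b) :
    IntervalIntegrable ρ volume a b :=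
  ⟨(integrableOn_Ioc_zero_of_continuousOn hcont hint b).mono_set (Ioc_subset_Ioc_left ha),
    (integrableOn_Ioc_zero_of_continuousOn hcont hint a).mono_set (Ioc_subset_Ioc_left hb)⟩

noncomputable def tiltedPrimitive (ρ : ℝ → ℝ) (c t : ℝ) : ℝ :=
  (∫ s in (1 : ℝ)..t, ρ s) - c * t

theorem continuousOn_tiltedPrimitive (hcont : ContinuousOn ρ (Ioi 0))
    (hint : IntegrableOn ρ (Ioc 0 1)) (c : ℝ) :
    ContinuousOn (tiltedPrimitive ρ c) (Ici 0) := by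
  refine ContinuousOn.sub (fun t _ => ?_) (continuousOn_const.mul continuousOn_id)
  have hwithin : ContinuousWithinAt (fun t => ∫ s in (1 : ℝ)..t, ρ s) (Icc 0 (t + 1)) t :=
    intervalIntegral.continuousWithinAt_primitive (measure_singleton t)
      (intervalIntegrable_of_continuousOn_Ioi hcont hint (le_min zero_le_one le_rfl)
        (le_max_of_le_left zero_le_one))
  rw [← Ici_inter_Iic] at hwithin
  exact (continuousWithinAt_inter (Iic_mem_nhds (lt_add_one t))).1 hwithin

theorem tiltedPrimitive_sub (hcont : ContinuousOn ρ (Ioi 0))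
    (hint : IntegrableOn ρ (Ioc 0 1)) (c : ℝ) {a t : ℝ} (ha : 0 ≤ a) (ht : 0 ≤ t) :
    tiltedPrimitive ρ c t - tiltedPrimitive ρ c a = ∫ s in a..t, (ρ s - c) := by
  have hII := @intervalIntegrable_of_continuousOn_Ioi ρ hcont hint
  rw [intervalIntegral.integral_sub (hII ha ht) intervalIntegrable_const,
    intervalIntegral.integral_const, smul_eq_mul,
    ← intervalIntegral.integral_interval_sub_left (hII zero_le_one ht) (hII zero_le_one ha),
    tiltedPrimitive, tiltedPrimitive]
  ring

theorem integral_sub_apply_pos (hmono : StrictMonoOn ρ (Ioi 0)) {z t : ℝ}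
    (hII : IntervalIntegrable ρ volume z t) (hz : 0 < z) (ht : 0 ≤ t) (hne : t ≠ z) :
    0 < ∫ s in z..t, (ρ s - ρ z) := by
  rcases hne.lt_or_gt with hlt | hgt
  · rw [intervalIntegral.integral_symm, ← intervalIntegral.integral_neg]
    refine intervalIntegral.intervalIntegral_pos_of_pos_on
      (hII.symm.sub intervalIntegrable_const).neg (fun s hs => ?_) hlt
    exact neg_pos.2 (sub_neg.2 (hmono (ht.trans_lt hs.1) hz hs.2))
  · exact intervalIntegral.intervalIntegral_pos_of_pos_on (hII.sub intervalIntegrable_const)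
      (fun s hs => sub_pos.2 (hmono hz (hz.trans hs.1) hs.1)) hgt

theorem tiltedPrimitive_lt (hcont : ContinuousOn ρ (Ioi 0)) (hint : IntegrableOn ρ (Ioc 0 1))
    (hmono : StrictMonoOn ρ (Ioi 0)) {z t : ℝ} (hz : 0 < z) (ht : 0 ≤ t) (hne : t ≠ z) :
    tiltedPrimitive ρ (ρ z) z < tiltedPrimitive ρ (ρ z) t := by
  rw [← sub_pos, tiltedPrimitive_sub hcont hint _ hz.le ht]
  exact integral_sub_apply_pos hmono (intervalIntegrable_of_continuousOn_Ioi hcont hint hz.le ht) hz ht hne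

theorem isMinOn_tiltedPrimitive (hcont : ContinuousOn ρ (Ioi 0))
    (hint : IntegrableOn ρ (Ioc 0 1)) (hmono : StrictMonoOn ρ (Ioi 0)) {z : ℝ} (hz : 0 < z) :
    IsMinOn (tiltedPrimitive ρ (ρ z)) (Ici 0) z := isMinOn_iff.2 fun t ht =>
  (eq_or_ne t z).elim (fun h => (congrArg _ h).ge) fun h => (tiltedPrimitive_lt hcont hint hmono hz ht h).le

theorem tendsto_tiltedPrimitive_atTop (hcont : ContinuousOn ρ (Ioi 0))
    (hint : IntegrableOn ρ (Ioc 0 1)) (hmono : MonotoneOn ρ (Ioi 0))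
    (hunbdd : ¬BddAbove (ρ '' Ioi 0)) (c : ℝ) :
    Tendsto (tiltedPrimitive ρ c) atTop atTop := by
  obtain ⟨_, ⟨T, hT, rfl⟩, hcT⟩ := not_bddAbove_iff.1 hunbdd (c + 1)
  have hT0 : 0 ≤ T := le_of_lt hT
  have hgrowth : ∀ t ≥ T, t + (tiltedPrimitive ρ c T - T) ≤ tiltedPrimitive ρ c t := by
    intro t htT
    have hslope := intervalIntegral.integral_mono_on htT intervalIntegrable_const
      ((intervalIntegrable_of_continuousOn_Ioi hcont hint hT0 (hT0.trans htT)).sub intervalIntegrable_const)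
      (fun s hs => show (1 : ℝ) ≤ ρ s - c by linarith [hmono hT (hT.trans_le hs.1) hs.1])
    rw [intervalIntegral.integral_const, smul_eq_mul, mul_one,
      ← tiltedPrimitive_sub hcont hint c hT0 (hT0.trans htT)] at hslope
    linarith
  exact tendsto_atTop_mono' atTop ((eventually_ge_atTop T).mono hgrowth)
    (tendsto_atTop_add_const_right _ _ tendsto_id)

end TiltedPrimitive

section Orthant

variable {ι : Type*}

theorem isClosed_setOf_forall_nonneg : IsClosed {x : EuclideanSpace ℝ ι | ∀ k, 0 ≤ x k} := by
  simp only [ofPred_forall]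
  exact isClosed_iInter fun k => isClosed_le continuous_const (PiLp.continuous_apply 2 _ k)

theorem continuousOn_sum_apply [Fintype ι] {g : ι → ℝ → ℝ} (hg : ∀ i, ContinuousOn (g i) (Ici 0)) :
    ContinuousOn (fun x : EuclideanSpace ℝ ι => ∑ i, g i (x i)) {x | ∀ k, 0 ≤ x k} :=
  continuousOn_finsetSum _ fun i _ =>
    (hg i).comp (PiLp.continuous_apply 2 _ i).continuousOn fun _ hx => hx i

theorem sum_apply_lt_sum_apply [Fintype ι] {g : ι → ℝ → ℝ} {z x : EuclideanSpace ℝ ι}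
    (hmin : ∀ i t, 0 ≤ t → t ≠ z i → g i (z i) < g i t) (hx : ∀ k, 0 ≤ x k) (hne : x ≠ z) :
    ∑ i, g i (z i) < ∑ i, g i (x i) := by
  obtain ⟨j, hj⟩ : ∃ j, x j ≠ z j := by
    by_contra! h
    exact hne (PiLp.ext h)
  refine Finset.sum_lt_sum (fun i _ => ?_) ⟨j, Finset.mem_univ j, hmin j _ (hx j) hj⟩
  rcases eq_or_ne (x i) (z i) with h | h
  · rw [h]
  · exact (hmin i _ (hx i) h).le

theorem isCompact_setOf_sum_apply_le [Fintype ι] {g : ι → ℝ → ℝ} (hcont : ∀ i, ContinuousOn (g i) (Ici 0))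
    (hbdd : ∀ i, BddBelow (g i '' Ici 0)) (htend : ∀ i, Tendsto (g i) atTop atTop) (w : ℝ) :
    IsCompact {x : EuclideanSpace ℝ ι | (∀ k, 0 ≤ x k) ∧ ∑ i, g i (x i) ≤ w} := by
  choose m hm using hbdd
  set B : ι → ℝ := fun i => w - ∑ j, m j + m i
  choose R hR using fun i => eventually_atTop.1 ((htend i).eventually_gt_atTop (B i))
  have hclosed := (continuousOn_sum_apply hcont).preimage_isClosed_of_isClosed
    isClosed_setOf_forall_nonneg (isClosed_Iic (a := w))
  refine ((isCompact_univ_pi fun i => isCompact_Icc (a := 0) (b := R i)).image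
    (PiLp.continuous_toLp 2 _)).of_isClosed_subset hclosed ?_
  rintro x ⟨hx, hxw⟩
  refine ⟨WithLp.ofLp x, fun i _ => ⟨hx i, ?_⟩, rfl⟩
  have hBi : g i (x i) ≤ B i := by
    have := Finset.single_le_sum (f := fun j => g j (x j) - m j)
      (fun j _ => sub_nonneg.2 (hm j (mem_image_of_mem _ (hx j)))) (Finset.mem_univ i)
    rw [Finset.sum_sub_distrib] at this
    simp only [B]
    linarith
  exact not_lt.1 fun h => (hR i _ h.le).not_ge hBi

end Orthant

theorem stmt_18_general
    (n : ℕ)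
    (θ : ℝ → ℝ)
    (hθlip : LocallyLipschitz θ)
    (hθ0 : θ 0 = 0)
    (hθmono : StrictMonoOn θ (Set.Ici (0:ℝ)))
    (hθonto : ∀ r : ℝ, 0 ≤ r → ∃ y : ℝ, 0 ≤ y ∧ θ y = r)
    (hθint : MeasureTheory.IntegrableOn (fun y => |Real.log (θ y)|) (Set.Ioc (0:ℝ) 1))
    (z : EuclideanSpace ℝ (Fin n)) (hz : ∀ k, 0 < z k)
    (W : EuclideanSpace ℝ (Fin n) → ℝ)
    (hW : ∀ x : EuclideanSpace ℝ (Fin n),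
      W x = ∑ i, ((∫ s in (1:ℝ)..(x i), Real.log (θ s)) - Real.log (θ (z i)) * x i))
    :
    ContinuousOn W {x : EuclideanSpace ℝ (Fin n) | ∀ k, 0 ≤ x k} ∧
    (∀ x : EuclideanSpace ℝ (Fin n), (∀ k, 0 ≤ x k) → x ≠ z → W z < W x) ∧
    (∀ w : ℝ, IsCompact {x : EuclideanSpace ℝ (Fin n) | (∀ k, 0 ≤ x k) ∧ W x ≤ w}) := by
  set ρ : ℝ → ℝ := fun s => Real.log (θ s)
  have hθpos : ∀ t, 0 < t → 0 < θ t := fun t ht => hθ0 ▸ hθmono self_mem_Ici ht.le ht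
  have hcont : ContinuousOn ρ (Ioi 0) := fun t ht =>
    (hθlip.continuous.continuousAt.log (hθpos t ht).ne').continuousWithinAt
  have hmono : StrictMonoOn ρ (Ioi 0) := fun a ha b hb hab =>
    Real.log_lt_log (hθpos a ha) (hθmono (Ioi_subset_Ici_self ha) (Ioi_subset_Ici_self hb) hab)
  have hint : IntegrableOn ρ (Ioc 0 1) := hθint.mono'
    (Real.measurable_log.comp hθlip.continuous.measurable).aestronglyMeasurable
    (ae_of_all _ fun _ => le_rfl)
  have hunbdd : ¬BddAbove (ρ '' Ioi 0) := by
    refine not_bddAbove_iff.2 fun c => ?_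
    obtain ⟨y, hy0, hy⟩ := hθonto (Real.exp (c + 1)) (Real.exp_pos _).le
    have hypos : 0 < y := hy0.lt_of_ne (by rintro rfl; exact (Real.exp_pos _).ne' (hy ▸ hθ0))
    refine ⟨_, ⟨y, hypos, rfl⟩, ?_⟩
    simp only [ρ, hy, Real.log_exp]
    linarith
  have hWg : W = fun x => ∑ i, tiltedPrimitive ρ (ρ (z i)) (x i) := funext hW
  subst hWg
  have hsummand := fun i => continuousOn_tiltedPrimitive hcont hint (ρ (z i))
  exact ⟨continuousOn_sum_apply hsummand,
    fun x hx hne => sum_apply_lt_sum_apply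
      (fun i _ ht hne => tiltedPrimitive_lt hcont hint hmono (hz i) ht hne) hx hne,
    isCompact_setOf_sum_apply_le hsummand
      (fun i => (isMinOn_tiltedPrimitive hcont hint hmono (hz i)).bddBelow)
      (fun i => tendsto_tiltedPrimitive_atTop hcont hint hmono.monotoneOn hunbdd _)⟩

theorem stmt_18
    (n : ℕ) (hn : 0 < n)
    (θ : ℝ → ℝ)
    (hθlip : LocallyLipschitz θ)
    (hθ0 : θ 0 = 0)
    (hθnn : ∀ y : ℝ, 0 ≤ θ y)
    (hθmono : StrictMonoOn θ (Set.Ici (0:ℝ)))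
    (hθonto : ∀ r : ℝ, 0 ≤ r → ∃ y : ℝ, 0 ≤ y ∧ θ y = r)
    (hθint : MeasureTheory.IntegrableOn (fun y => |Real.log (θ y)|) (Set.Ioc (0:ℝ) 1))
    (z : EuclideanSpace ℝ (Fin n)) (hz : ∀ k, 0 < z k)
    (W : EuclideanSpace ℝ (Fin n) → ℝ)
    (hW : ∀ x : EuclideanSpace ℝ (Fin n),
      W x = ∑ i, ((∫ s in (1:ℝ)..(x i), Real.log (θ s)) - Real.log (θ (z i)) * x i))
    :
    ContinuousOn W {x : EuclideanSpace ℝ (Fin n) | ∀ k, 0 ≤ x k} ∧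
    (∀ x : EuclideanSpace ℝ (Fin n), (∀ k, 0 ≤ x k) → x ≠ z → W z < W x) ∧
    (∀ w : ℝ, IsCompact {x : EuclideanSpace ℝ (Fin n) | (∀ k, 0 ≤ x k) ∧ W x ≤ w}) :=
  stmt_18_general n θ hθlip hθ0 hθmono hθonto hθint z hz W hW
end
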